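/- A skew-symmetric (alternating) nondegenerate bilinear pairing on a finite abelian group forces the group order to be a perfect square: if G is a finite abelian group admitting a nondegenerate alternating bilinear pairing G × G → ℚ/ℤ, then |G| is a perfect square. -/

import Mathlib

open AddSubgroup

section Aux

/-- Elements of `ℚ/ℤ` killed by `n` are multiples of `1/n`. -/
private lemma qz_lift {n : ℕ} (hn : 0 < n) (u : ℚ ⧸ zmultiples (1 : ℚ))
    (hu : n • u = 0) :
    ∃ m : ℤ, u = m • ((((n : ℚ)⁻¹ : ℚ) : ℚ ⧸ zmultiples (1 : ℚ))) := by
  induction u using QuotientAddGroup.induction_on with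
  | H r =>
    have hu' : ((n • r : ℚ) : ℚ ⧸ zmultiples (1 : ℚ)) = 0 := hu
    rw [QuotientAddGroup.eq_zero_iff, mem_zmultiples_iff] at hu'
    obtain ⟨m, hm⟩ := hu'
    refine ⟨m, ?_⟩
    have : ((m • ((n : ℚ)⁻¹) : ℚ) : ℚ ⧸ zmultiples (1 : ℚ))
        = m • ((((n : ℚ)⁻¹ : ℚ) : ℚ ⧸ zmultiples (1 : ℚ))) := rfl
    rw [← this]
    congr 1
    have hn' : (n : ℚ) ≠ 0 := by positivity
    have hm' : (m : ℚ) = n * r := by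
      simpa [zsmul_eq_mul, nsmul_eq_mul] using hm
    rw [zsmul_eq_mul, hm', mul_comm, ← mul_assoc, inv_mul_cancel₀ hn', one_mul]

private lemma qz_ord {n : ℕ} (hn : 0 < n) :
    addOrderOf ((((n : ℚ)⁻¹ : ℚ) : ℚ ⧸ zmultiples (1 : ℚ))) = n := by
  haveI : Fact ((0 : ℚ) < 1) := ⟨one_pos⟩
  simpa [one_div] using AddCircle.addOrderOf_period_div (p := (1 : ℚ)) hn

set_option maxHeartbeats 1000000 in
private theorem aux_card_isSquare (N : ℕ) : ∀ (G : Type u) [AddCommGroup G] [Finite G]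
    (b : G →+ G →+ ℚ ⧸ AddSubgroup.zmultiples (1 : ℚ)),
    (∀ x : G, b x x = 0) → (∀ x : G, (∀ y : G, b x y = 0) → x = 0) →
    Nat.card G ≤ N → IsSquare (Nat.card G) := by
  induction N with
  | zero =>
    intro G _ _ b halt hnd hcard
    have : 0 < Nat.card G := Nat.card_pos
    omega
  | succ N IH =>
    intro G _ _ b halt hnd hcard
    rcases subsingleton_or_nontrivial G with hs | hnt
    · haveI := hs
      rw [Nat.card_of_subsingleton (0 : G)]
      exact ⟨1, rfl⟩
    · classical
      set n := AddMonoid.exponent G with hn_def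
      have hn1 : 1 < n := AddMonoid.one_lt_exponent
      have hn0 : 0 < n := by omega
      have hexp : ∀ g : G, n • g = 0 := fun g =>
        AddMonoid.exponent_nsmul_eq_zero g
      have hexp' : ∀ g : G, (n : ℤ) • g = 0 := fun g => by
        rw [natCast_zsmul]; exact hexp g
      obtain ⟨x, hx⟩ := AddMonoid.exists_addOrderOf_eq_exponent
        (AddMonoid.ExponentExists.of_finite (G := G))
      -- basic facts about the pairing
      have hadd : ∀ u v w : G, b (u + v) w = b u w + b v w := fun u v w => by
        rw [map_add]; rfl
      have hsub : ∀ u v w : G, b (u - v) w = b u w - b v w := fun u v w => by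
        rw [map_sub]; rfl
      have hzsmul : ∀ (m : ℤ) (u v : G), b (m • u) v = m • b u v := fun m u v => by
        rw [map_zsmul]; rfl
      set ι : ℚ ⧸ zmultiples (1 : ℚ) := (((n : ℚ)⁻¹ : ℚ) : ℚ ⧸ zmultiples (1 : ℚ)) with hι_def
      have hι_ord : addOrderOf ι = n := qz_ord hn0
      have hιn : (n : ℤ) • ι = 0 := by
        rw [← addOrderOf_dvd_iff_zsmul_eq_zero, hι_ord]
      have hskew : ∀ u v : G, b u v = - b v u := by
        intro u v
        have h := halt (u + v)
        rw [hadd, map_add, map_add, halt u, halt v, zero_add, add_zero] at h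
        exact eq_neg_of_add_eq_zero_left h
      have htor : ∀ g z : G, n • b g z = 0 := by
        intro g z
        have h1 : b (n • g) z = 0 := by rw [hexp g]; simp
        rw [← natCast_zsmul, hzsmul, natCast_zsmul] at h1
        exact h1
      have hinj : Function.Injective b := by
        rw [injective_iff_map_eq_zero]
        intro a ha
        exact hnd a fun z => by rw [ha]; rfl
      have hbx_ord : addOrderOf (b x) = n := by
        rw [addOrderOf_injective b hinj x, hx]
      -- Find y with b x y = ι
      have key : ∃ y : G, b x y = ι := by
        set f : ℤ →+ ℚ ⧸ zmultiples (1 : ℚ) := zmultiplesHom _ ι with hf_def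
        have hf_app : ∀ m : ℤ, f m = m • ι := fun m => rfl
        set S : AddSubgroup ℤ := ((b x).range.comap f) with hS_def
        obtain ⟨a, hSa⟩ := Int.subgroup_cyclic S
        have hnS : (n : ℤ) ∈ S := by
          have h0 : f (n : ℤ) = 0 := hιn
          have : f (n : ℤ) ∈ (b x).range := by rw [h0]; exact zero_mem _
          exact this
        have hval : ∀ z : G, ∃ m : ℤ, m ∈ S ∧ b x z = f m := by
          intro z
          obtain ⟨m, hm⟩ := qz_lift hn0 (b x z) (htor x z)
          refine ⟨m, ?_, hm.trans (hf_app m).symm⟩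
          have : f m ∈ (b x).range := ⟨z, hm.trans (hf_app m).symm⟩
          exact this
        have hc' : ∃ c : ℕ, n = a.natAbs * c := by
          rw [hSa, mem_closure_singleton] at hnS
          obtain ⟨k, hk⟩ := hnS
          have : a ∣ (n : ℤ) := ⟨k, by rw [← hk, smul_eq_mul]; ring⟩
          exact Int.ofNat_dvd.mp (Int.natAbs_dvd.mpr this)
        obtain ⟨c, hc⟩ := hc'
        have hc0 : 0 < c := by
          rcases Nat.eq_zero_or_pos c with h | h
          · exfalso; rw [h, mul_zero] at hc; omega
          · exact h
        have hcsmul : c • b x = 0 := by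
          ext z
          obtain ⟨m, hmS, hm⟩ := hval z
          rw [hSa, mem_closure_singleton] at hmS
          obtain ⟨k, hk⟩ := hmS
          have hdvd : (n : ℤ) ∣ (c : ℤ) * m := by
            rw [← hk, smul_eq_mul]
            have h1 : (n : ℤ) ∣ (c : ℤ) * a := by
              rw [← Int.dvd_natAbs]
              have h2 : ((c : ℤ) * a).natAbs = c * a.natAbs := by
                simp [Int.natAbs_mul]
              rw [h2, mul_comm]
              exact dvd_of_eq (by exact_mod_cast hc)
            calc (n : ℤ) ∣ (c : ℤ) * a := h1
              _ ∣ (c : ℤ) * (k * a) := ⟨k, by ring⟩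
          have hz : (c : ℤ) • b x z = 0 := by
            rw [hm, hf_app, smul_smul, ← addOrderOf_dvd_iff_zsmul_eq_zero, hι_ord]
            exact hdvd
          show c • b x z = 0
          rw [← natCast_zsmul]
          exact hz
        have hndc : n ∣ c := by
          rw [← hbx_ord]
          exact addOrderOf_dvd_of_nsmul_eq_zero hcsmul
        have hcn : c ∣ n := ⟨a.natAbs, by rw [hc, mul_comm]⟩
        have hceq : c = n := Nat.dvd_antisymm hcn hndc
        have ha1 : a.natAbs = 1 := by
          rw [hceq] at hc
          exact Nat.eq_of_mul_eq_mul_right hn0 (by rw [one_mul, ← hc])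
        have h1S : (1 : ℤ) ∈ S := by
          rw [hSa, mem_closure_singleton]
          rcases Int.natAbs_eq_iff.mp ha1 with h | h
          · exact ⟨1, by rw [h]; simp⟩
          · exact ⟨-1, by rw [h]; simp⟩
        have h1S' : f 1 ∈ (b x).range := h1S
        obtain ⟨y, hy⟩ := h1S'
        refine ⟨y, ?_⟩
        rw [hy, hf_app, one_smul]
      obtain ⟨y, hxy⟩ := key
      have hyx : b y x = -ι := by rw [hskew y x, hxy]
      -- the orthogonal complement of ⟨x, y⟩
      set K : AddSubgroup G := (b.flip x).ker ⊓ (b.flip y).ker with hK_def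
      have hKmem : ∀ g : G, g ∈ K ↔ b g x = 0 ∧ b g y = 0 := by
        intro g
        simp [hK_def, AddMonoidHom.mem_ker]
      -- decomposition of arbitrary elements
      have hdecomp : ∀ g : G, ∃ (α β : ℤ) (k : G), k ∈ K ∧ g = α • x + β • y + k := by
        intro g
        obtain ⟨m₁, hm₁⟩ := qz_lift hn0 (b g x) (htor g x)
        obtain ⟨m₂, hm₂⟩ := qz_lift hn0 (b g y) (htor g y)
        have hm₁' : b g x = m₁ • ι := hm₁
        have hm₂' : b g y = m₂ • ι := hm₂
        refine ⟨m₂, -m₁, g - m₂ • x - (-m₁) • y, ?_, by abel⟩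
        rw [hKmem]
        constructor
        · rw [hsub, hsub, hzsmul, hzsmul, hm₁', halt x, hyx, smul_zero, sub_zero,
            smul_neg, neg_smul, neg_neg]
          abel
        · rw [hsub, hsub, hzsmul, hzsmul, hm₂', hxy, halt y, smul_zero, sub_zero]
          exact sub_self _
      -- the homomorphism (ZMod n × ZMod n) × K →+ G
      set Φx : ZMod n →+ G := ZMod.lift n ⟨zmultiplesHom G x, by simpa using hexp' x⟩ with hΦx
      set Φy : ZMod n →+ G := ZMod.lift n ⟨zmultiplesHom G y, by simpa using hexp' y⟩ with hΦy
      have hΦx_coe : ∀ m : ℤ, Φx (m : ZMod n) = m • x := fun m => by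
        rw [hΦx, ZMod.lift_coe]; rfl
      have hΦy_coe : ∀ m : ℤ, Φy (m : ZMod n) = m • y := fun m => by
        rw [hΦy, ZMod.lift_coe]; rfl
      set Φ : (ZMod n × ZMod n) × K →+ G := (Φx.coprod Φy).coprod K.subtype with hΦ
      have hΦ_apply : ∀ (α β : ZMod n) (k : K), Φ ((α, β), k) = Φx α + Φy β + (k : G) := by
        intro α β k
        show Φx α + Φy β + (k : G) = Φx α + Φy β + (k : G)
        rfl
      have hΦsurj : Function.Surjective Φ := by
        intro g
        obtain ⟨α, β, k, hk, hg⟩ := hdecomp g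
        refine ⟨(((α : ZMod n), (β : ZMod n)), ⟨k, hk⟩), ?_⟩
        rw [hΦ_apply, hΦx_coe, hΦy_coe]
        exact hg.symm
      have hΦinj : Function.Injective Φ := by
        rw [injective_iff_map_eq_zero]
        rintro ⟨⟨α, β⟩, k⟩ h0
        obtain ⟨α', rfl⟩ := ZMod.intCast_surjective α
        obtain ⟨β', rfl⟩ := ZMod.intCast_surjective β
        rw [hΦ_apply, hΦx_coe, hΦy_coe] at h0
        have hkK := (hKmem (k : G)).mp k.2
        have hα : (n : ℤ) ∣ α' := by
          have h1 : b (α' • x + β' • y + (k : G)) y = 0 := by rw [h0]; simp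
          rw [hadd, hadd, hzsmul, hzsmul, hxy, halt y, smul_zero, add_zero, hkK.2,
            add_zero] at h1
          rw [← hι_ord]
          exact addOrderOf_dvd_iff_zsmul_eq_zero.mpr h1
        have hβ : (n : ℤ) ∣ β' := by
          have h1 : b (α' • x + β' • y + (k : G)) x = 0 := by rw [h0]; simp
          rw [hadd, hadd, hzsmul, hzsmul, hyx, halt x, smul_zero, zero_add, hkK.1,
            add_zero, smul_neg, neg_eq_zero] at h1
          rw [← hι_ord]
          exact addOrderOf_dvd_iff_zsmul_eq_zero.mpr h1
        have hαx : α' • x = 0 := by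
          obtain ⟨t, rfl⟩ := hα
          rw [mul_comm, mul_smul, hexp' x, smul_zero]
        have hβy : β' • y = 0 := by
          obtain ⟨t, rfl⟩ := hβ
          rw [mul_comm, mul_smul, hexp' y, smul_zero]
        have hk0 : (k : G) = 0 := by
          rw [hαx, hβy] at h0
          simpa using h0
        have hα0 : (α' : ZMod n) = 0 := (ZMod.intCast_zmod_eq_zero_iff_dvd α' n).mpr hα
        have hβ0 : (β' : ZMod n) = 0 := (ZMod.intCast_zmod_eq_zero_iff_dvd β' n).mpr hβ
        refine Prod.ext (Prod.ext ?_ ?_) ?_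
        · exact hα0
        · exact hβ0
        · exact Subtype.ext hk0
      have hcards : Nat.card G = n * n * Nat.card K := by
        have h := Nat.card_eq_of_bijective Φ ⟨hΦinj, hΦsurj⟩
        rw [Nat.card_prod, Nat.card_prod, Nat.card_zmod] at h
        rw [← h]
      -- restricted pairing on K
      set b' : K →+ K →+ ℚ ⧸ zmultiples (1 : ℚ) :=
        ((b.comp K.subtype).flip.comp K.subtype).flip with hb'_def
      have hb' : ∀ k k' : K, b' k k' = b (k : G) (k' : G) := fun _ _ => rfl
      have halt' : ∀ k : K, b' k k = 0 := fun k => halt (k : G)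
      have hnd' : ∀ k : K, (∀ k' : K, b' k k' = 0) → k = 0 := by
        intro k hk0
        have hkK := (hKmem (k : G)).mp k.2
        have hkx : b (k : G) x = 0 := hkK.1
        have hky : b (k : G) y = 0 := hkK.2
        have : (k : G) = 0 := by
          apply hnd
          intro g
          obtain ⟨α, β, k', hk', rfl⟩ := hdecomp g
          rw [map_add, map_add, map_zsmul, map_zsmul, hkx, hky, smul_zero, smul_zero,
            zero_add, zero_add]
          exact hk0 ⟨k', hk'⟩
        exact Subtype.ext this
      -- induction hypothesis
      have hKcard_pos : 0 < Nat.card K := Nat.card_pos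
      have hlt : Nat.card K < Nat.card G := by
        rw [hcards]
        have h4 : 2 * 2 ≤ n * n := Nat.mul_le_mul hn1 hn1
        nlinarith
      have hKle : Nat.card K ≤ N := by omega
      obtain ⟨r, hr⟩ := IH K b' halt' hnd' hKle
      exact ⟨n * r, by rw [hcards, hr]; ring⟩

end Aux

/-- A finite abelian group admitting a nondegenerate alternating bilinear pairing
into ℚ/ℤ has order a perfect square. -/
theorem card_isSquare_of_alternating_nondegenerate_pairing
    (G : Type*) [AddCommGroup G] [Finite G]
    (b : G →+ G →+ ℚ ⧸ AddSubgroup.zmultiples (1 : ℚ))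
    (halt : ∀ x : G, b x x = 0)
    (hnd : ∀ x : G, (∀ y : G, b x y = 0) → x = 0) :
    IsSquare (Nat.card G) := by
  exact aux_card_isSquare (Nat.card G) G b halt hnd le_rfl
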